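/- arXiv:2212.02169 — 2 statements merged into one kernel-verified Lean document; each statement's English description precedes it below -/
import Mathlib

section
/- Let T be a tree and let G = (T, F) be a T-graph, i.e., a subgraph of the comparability graph of T with vertex set T such that for every t ∈ T the set of neighbors of t below t is cofinal in the set of predecessors of t (and contains the maximum predecessor if one exists). If κ is a regular uncountable cardinal and T has a κ-branch, then K_κ is a minor of G. -/
universe u

open Cardinal

def Colorable' {V : Type u} (G : SimpleGraph V) (μ : Cardinal.{u}) : Prop :=
  ∃ (β : Type u) (c : V → β), #β ≤ μ ∧ ∀ ⦃x y : V⦄, G.Adj x y → c x ≠ c y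

def ChromaticEq {V : Type u} (G : SimpleGraph V) (μ : Cardinal.{u}) : Prop :=
  Colorable' G μ ∧ ∀ ν : Cardinal.{u}, ν < μ → ¬ Colorable' G ν

def HasCompleteMinor {V : Type u} (G : SimpleGraph V) (κ : Cardinal.{u}) : Prop :=
  ∃ (ι : Type u) (U : ι → Set V), #ι = κ ∧
    (∀ i, (U i).Nonempty) ∧
    (∀ i j, i ≠ j → Disjoint (U i) (U j)) ∧
    (∀ i, (G.induce (U i)).Connected) ∧
    (∀ i j, i ≠ j → ∃ x ∈ U i, ∃ y ∈ U j, G.Adj x y)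

def IsSetTree (T : Type u) [PartialOrder T] : Prop :=
  ∀ t : T, IsWellOrder {s : T // s < t} (· < ·)

def compGraph (T : Type u) [PartialOrder T] : SimpleGraph T :=
  SimpleGraph.fromRel (· ≤ ·)

def IsSpecialTree (T : Type u) [PartialOrder T] (κ : Cardinal.{u}) : Prop :=
  ∃ (β : Type u) (f : T → β), #β ≤ κ ∧ ∀ ⦃s t : T⦄, s < t → f s ≠ f t

def HasChainOfSize (T : Type u) [PartialOrder T] (κ : Cardinal.{u}) : Prop :=
  ∃ C : Set T, IsChain (· ≤ ·) C ∧ #C = κ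

def HasAntichainOfSize (T : Type u) [PartialOrder T] (κ : Cardinal.{u}) : Prop :=
  ∃ A : Set T, IsAntichain (· ≤ ·) A ∧ #A = κ

def HasIndepOfSize {V : Type u} (G : SimpleGraph V) (κ : Cardinal.{u}) : Prop :=
  ∃ S : Set V, #S = κ ∧ ∀ x ∈ S, ∀ y ∈ S, ¬ G.Adj x y

def AllChainsCountable (T : Type u) [PartialOrder T] : Prop :=
  ∀ C : Set T, IsChain (· ≤ ·) C → #C ≤ ℵ₀

noncomputable def nodeHeight {T : Type u} [PartialOrder T] (hT : IsSetTree T) (t : T) : Ordinal.{u} :=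
  @Ordinal.type {s : T // s < t} (· < ·) (hT t)

def KappaLambdaConnected {V : Type u} (G : SimpleGraph V) (κ μ : Cardinal.{u}) : Prop :=
  ∀ S : Set V, #S < κ → (Sᶜ : Set V).Nonempty ∧ #((G.induce (Sᶜ : Set V)).ConnectedComponent) < μ

def KappaConnected {V : Type u} (G : SimpleGraph V) (κ : Cardinal.{u}) : Prop :=
  κ ≤ #V ∧ ∀ S : Set V, #S < κ → (G.induce (Sᶜ : Set V)).Connected

def ContainsSubdivisionOfComplete {V : Type u} (G : SimpleGraph V) (κ : Cardinal.{u}) : Prop :=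
  ∃ (ι : Type u) (v : ι → V), #ι = κ ∧ Function.Injective v ∧
    ∃ p : ∀ i j : ι, G.Walk (v i) (v j),
      (∀ i j, i ≠ j → (p i j).IsPath) ∧
      (∀ i j k l, i ≠ j → k ≠ l → (i, j) ≠ (k, l) → (i, j) ≠ (l, k) →
        ∀ x, x ∈ (p i j).support → x ∈ (p k l).support → x ∈ Set.range v) ∧
      (∀ i j k, i ≠ j → v k ∈ (p i j).support → k = i ∨ k = j)

def IsTGraph {T : Type u} [PartialOrder T] (G : SimpleGraph T) : Prop :=
  (∀ ⦃s t⦄, G.Adj s t → s < t ∨ t < s) ∧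
  (∀ t s : T, s < t → ∃ r, s ≤ r ∧ r < t ∧ G.Adj r t)

/-!
The downward closure of a `κ`-branch is a well-ordered chain, and its initial segment of type
`κ` is downward closed in `T`; pulling `G` back to it gives a `T`-graph on the well-order `κ`,
and a minor there is a minor of `G`. In such a graph, above every `x` there is a vertex
`root x` whose neighbours are unbounded in `κ`; pick neighbours `nbr x y > y` of it. For the
unboundedly many `δ < κ` closed under both operations, the intervals `[root δ, next δ)`, with
`next δ` the next closure point, are connected (every vertex has a neighbour below it in each
interval ending at it), pairwise disjoint, and `nbr δ (root δ')` joins the interval of `δ` to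
that of `δ' > δ`.
-/

open Set

namespace IsSetTree

variable {T : Type u} [PartialOrder T]

theorem wellFoundedLT (hT : IsSetTree T) : WellFoundedLT T := by
  refine ⟨⟨fun t => ⟨t, fun s hst => ?_⟩⟩⟩
  have := hT t
  suffices ∀ p : {s : T // s < t}, Acc (· < ·) (p : T) from this ⟨s, hst⟩
  intro p
  induction p using WellFoundedLT.induction with
  | _ p ih => exact ⟨_, fun r hrp => ih ⟨r, hrp.trans p.2⟩ hrp⟩

theorem le_total_of_le (hT : IsSetTree T) {x y c : T} (hx : x ≤ c) (hy : y ≤ c) :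
    x ≤ y ∨ y ≤ x := by
  rcases hx.eq_or_lt with rfl | hx
  · exact .inr hy
  rcases hy.eq_or_lt with rfl | hy
  · exact .inl hx.le
  have := hT c
  rcases trichotomous_of (· < ·) (⟨x, hx⟩ : {s // s < c}) ⟨y, hy⟩ with h | h | h
  · exact .inl (le_of_lt h)
  · exact .inl (congrArg Subtype.val h).le
  · exact .inr (le_of_lt h)

theorem isChain_lowerClosure (hT : IsSetTree T) {C : Set T} (hC : IsChain (· ≤ ·) C) :
    IsChain (· ≤ ·) (lowerClosure C : Set T) := by
  rintro x ⟨c, hc, hxc⟩ y ⟨d, hd, hyd⟩ -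
  rcases hC.total hc hd with hcd | hdc
  · exact hT.le_total_of_le (hxc.trans hcd) hyd
  · exact hT.le_total_of_le hxc (hyd.trans hdc)

theorem exists_strictMono_toType {κ : Cardinal.{u}} (hT : IsSetTree T) {C : Set T}
    (hC : IsChain (· ≤ ·) C) (hCκ : κ ≤ #C) :
    ∃ e : κ.ord.ToType → T, StrictMono e ∧ ∀ i, ∀ t < e i, t ∈ range e := by
  classical
  have := hT.wellFoundedLT
  set D : LowerSet T := lowerClosure C
  let _ : LinearOrder D := (hT.isChain_lowerClosure hC).linearOrder
  have hκD : κ.ord ≤ Ordinal.type (α := D) (· < ·) := by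
    rw [Cardinal.ord_le, Ordinal.card_type]
    exact hCκ.trans (Cardinal.mk_le_mk_of_subset subset_lowerClosure)
  rw [← Ordinal.type_toType κ.ord, Ordinal.type_le_iff] at hκD
  obtain ⟨f⟩ := hκD
  refine ⟨fun i => f i, fun i j hij => f.map_rel_iff.2 hij, fun i t hti => ?_⟩
  obtain ⟨j, hj⟩ := f.mem_range_of_rel (b := ⟨t, D.lower hti.le (f i).2⟩) hti
  exact ⟨j, congrArg Subtype.val hj⟩

end IsSetTree

namespace IsTGraph

variable {T : Type u} [PartialOrder T] {G : SimpleGraph T}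

theorem connected_induce [WellFoundedLT T] (hG : IsTGraph G) {U : Set T} {a : T}
    (ha : IsLeast U a) (hU : U.OrdConnected) : (G.induce U).Connected := by
  refine (SimpleGraph.connected_iff_exists_forall_reachable _).2 ⟨⟨a, ha.1⟩, ?_⟩
  rintro ⟨x, hx⟩
  induction x using WellFoundedLT.induction with
  | _ x ih =>
  rcases (ha.2 hx).eq_or_lt with rfl | hax
  · rfl
  obtain ⟨r, har, hrx, hrx_adj⟩ := hG.2 x a hax
  have hr : r ∈ U := hU.out ha.1 hx ⟨har, hrx.le⟩
  exact (ih r hrx hr).trans (SimpleGraph.Adj.reachable (G := G.induce U) hrx_adj)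

theorem comap {ι : Type*} [LinearOrder ι] (hG : IsTGraph G) {e : ι → T} (he : StrictMono e)
    (hdown : ∀ i, ∀ t < e i, t ∈ range e) : IsTGraph (G.comap e) := by
  refine ⟨fun i j hij => ?_, fun j i hij => ?_⟩
  · simpa only [he.lt_iff_lt] using hG.1 hij
  · obtain ⟨_, hir, hrj, hadj⟩ := hG.2 (e j) (e i) (he hij)
    obtain ⟨k, rfl⟩ := hdown j _ hrj
    exact ⟨k, he.le_iff_le.1 hir, he.lt_iff_lt.1 hrj, hadj⟩

end IsTGraph

theorem HasCompleteMinor.map {V W : Type u} {H : SimpleGraph V} {G : SimpleGraph W}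
    {κ : Cardinal.{u}} (f : H ↪g G) (h : HasCompleteMinor H κ) : HasCompleteMinor G κ := by
  obtain ⟨ι, U, hι, hne, hdisj, hconn, hadj⟩ := h
  refine ⟨ι, fun i => f '' U i, hι, fun i => (hne i).image f,
    fun i j hij => (disjoint_image_iff f.injective).2 (hdisj i j hij), fun i => ?_,
    fun i j hij => ?_⟩
  · refine (hconn i).map (SimpleGraph.induceHom f.toHom (mapsTo_image f (U i))) ?_
    rintro ⟨_, x, hx, rfl⟩
    exact ⟨⟨x, hx⟩, rfl⟩
  · obtain ⟨x, hx, y, hy, hxy⟩ := hadj i j hij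
    exact ⟨f x, mem_image_of_mem f hx, f y, mem_image_of_mem f hy, f.map_adj_iff.2 hxy⟩

section WellOrder

variable {ι : Type u} [LinearOrder ι]

theorem exists_forall_lt_of_mk_lt_cof {S : Set ι} (hS : #S < Order.cof ι) :
    ∃ b, ∀ s ∈ S, s < b :=
  not_isCofinal_iff.1 fun h => (Order.cof_le h).not_gt hS

variable [WellFoundedLT ι]

def IsClosedUnder (g : ι → ι → ι) (δ : ι) : Prop :=
  ∀ x < δ, ∀ y < δ, g x y < δ

variable {κ : Cardinal.{u}}

/-- Closure points are found as limits of `ω`-sequences, which stay bounded because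
`cof ι > ℵ₀`. -/
theorem exists_isClosedUnder_gt (hκ : ℵ₀ < κ) (hcof : κ ≤ Order.cof ι)
    (hsmall : ∀ x : ι, #(Iio x) < κ) (g : ι → ι → ι) (q : ι) :
    ∃ δ, q < δ ∧ IsClosedUnder g δ := by
  have hstep : ∀ x : ι, ∃ x', x < x' ∧ ∀ y < x, ∀ z < x, g y z < x' := by
    intro x
    have hcard : #(insert x (image2 g (Iio x) (Iio x)) : Set ι) < Order.cof ι := by
      refine lt_of_lt_of_le ?_ hcof
      calc #(insert x (image2 g (Iio x) (Iio x)) : Set ι)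
          ≤ #(Iio x) * #(Iio x) + 1 := mk_insert_le.trans (add_le_add_left mk_image2_le 1)
        _ < κ := add_lt_of_lt hκ.le (mul_lt_of_lt hκ.le (hsmall x) (hsmall x))
            (one_lt_aleph0.trans hκ)
    obtain ⟨b, hb⟩ := exists_forall_lt_of_mk_lt_cof hcard
    exact ⟨b, hb x (mem_insert x _),
      fun y hy z hz => hb _ (mem_insert_of_mem x (mem_image2_of_mem hy hz))⟩
  choose next lt_next hnext using hstep
  set x : ℕ → ι := fun n => next^[n] q
  have hx : StrictMono x := strictMono_nat_of_lt_succ fun n => by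
    simpa only [x, Function.iterate_succ_apply'] using lt_next _
  have hrange : #(range x) < Order.cof ι :=
    lt_of_le_of_lt (mk_le_aleph0_iff.2 (countable_range x).to_subtype) (hκ.trans_le hcof)
  obtain ⟨b, hb⟩ := exists_forall_lt_of_mk_lt_cof hrange
  obtain ⟨δ, hδ, hmin⟩ := wellFounded_lt.has_min {d | ∀ n, x n ≤ d}
    ⟨b, fun n => (hb _ (mem_range_self n)).le⟩
  have lt_seq : ∀ y < δ, ∃ n, y < x n := fun y hy => by
    by_contra! h
    exact hmin y h hy
  refine ⟨δ, (hx zero_lt_one).trans_le (hδ 1), fun y hy z hz => ?_⟩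
  obtain ⟨m, hm⟩ := lt_seq y hy
  obtain ⟨n, hn⟩ := lt_seq z hz
  calc g y z < x (max m n + 1) := by
        simp only [x, Function.iterate_succ_apply']
        exact hnext _ y (hm.trans_le (hx.monotone (le_max_left m n)))
          z (hn.trans_le (hx.monotone (le_max_right m n)))
    _ ≤ δ := hδ _

namespace IsTGraph

variable {H : SimpleGraph ι}

/-- If every vertex from `q` on had bounded neighbourhood, a closure point `δ` of the bounds
would have a neighbour `r ∈ [q, δ)` with bound below `δ`. -/
theorem exists_ge_forall_exists_gt_adj (hH : IsTGraph H) (hκ : ℵ₀ < κ)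
    (hcof : κ ≤ Order.cof ι) (hsmall : ∀ x : ι, #(Iio x) < κ) (q : ι) :
    ∃ ρ, q ≤ ρ ∧ ∀ y, ∃ z, y < z ∧ H.Adj ρ z := by
  by_contra! hbad
  have : ∀ ρ, ∃ y, q ≤ ρ → ∀ z, y < z → ¬ H.Adj ρ z := fun ρ =>
    if hρ : q ≤ ρ then (hbad ρ hρ).imp fun _ h _ => h else ⟨q, fun h => absurd h hρ⟩
  choose bound hbound using this
  obtain ⟨δ, hqδ, hδ⟩ := exists_isClosedUnder_gt hκ hcof hsmall (fun ρ _ => bound ρ) q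
  obtain ⟨r, hqr, hrδ, hadj⟩ := hH.2 δ q hqδ
  exact hbound r hqr δ (hδ r hrδ r hrδ) hadj

theorem hasCompleteMinor_of_wellOrder (hH : IsTGraph H) (hκ : ℵ₀ < κ) (hcard : #ι = κ)
    (hcof : κ ≤ Order.cof ι) (hsmall : ∀ x : ι, #(Iio x) < κ) : HasCompleteMinor H κ := by
  choose root le_root hroot using hH.exists_ge_forall_exists_gt_adj hκ hcof hsmall
  choose nbr lt_nbr adj_nbr using hroot
  set K : Set ι := {δ | IsClosedUnder (fun x y => max (root x) (nbr x y)) δ}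
  have hK : ∀ x, ∃ δ ∈ K, x < δ ∧ ∀ δ' ∈ K, x < δ' → δ ≤ δ' := fun x => by
    obtain ⟨δ, ⟨hδ, hxδ⟩, hmin⟩ := wellFounded_lt.has_min {δ | δ ∈ K ∧ x < δ}
      ((exists_isClosedUnder_gt hκ hcof hsmall _ x).imp fun _ h => ⟨h.2, h.1⟩)
    exact ⟨δ, hδ, hxδ, fun δ' hδ' hxδ' => not_lt.1 (hmin δ' ⟨hδ', hxδ'⟩)⟩
  choose next next_mem lt_next next_le using hK
  have nbr_lt_next : ∀ x y z, x < next z → y < next z → nbr x y < next z := fun x y z hx hy =>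
    (le_max_right _ _).trans_lt (next_mem z x hx y hy)
  have root_lt_next : ∀ x, root x < next x := fun x =>
    (le_max_left _ _).trans_lt (next_mem x x (lt_next x) x (lt_next x))
  have hpair : ∀ δ ∈ K, ∀ δ' ∈ K, δ < δ' →
      Disjoint (Ico (root δ) (next δ)) (Ico (root δ') (next δ')) ∧
      ∃ x ∈ Ico (root δ) (next δ), ∃ y ∈ Ico (root δ') (next δ'), H.Adj x y := by
    intro δ _ δ' hδ' hlt
    refine ⟨Ico_disjoint_Ico_same.mono_right
      (Ico_subset_Ico_left ((next_le δ δ' hδ' hlt).trans (le_root δ'))), root δ,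
      ⟨le_rfl, root_lt_next δ⟩, nbr δ (root δ'), ⟨(lt_nbr _ _).le, ?_⟩, adj_nbr _ _⟩
    exact nbr_lt_next _ _ _ (hlt.trans (lt_next δ')) (root_lt_next δ')
  refine ⟨K, fun δ => Ico (root δ) (next δ), ?_, fun δ => nonempty_Ico.2 (root_lt_next δ),
    fun i j hij => ?_, fun δ => hH.connected_induce (isLeast_Ico (root_lt_next δ))
      ordConnected_Ico, fun i j hij => ?_⟩
  · refine le_antisymm ((mk_set_le K).trans hcard.le) (not_lt.1 fun hK => ?_)
    obtain ⟨b, hb⟩ := exists_forall_lt_of_mk_lt_cof (hK.trans_le hcof)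
    exact (hb _ (next_mem b)).not_gt (lt_next b)
  · rcases (Subtype.coe_injective.ne hij).lt_or_gt with h | h
    · exact (hpair i i.2 j j.2 h).1
    · exact (hpair j j.2 i i.2 h).1.symm
  · rcases (Subtype.coe_injective.ne hij).lt_or_gt with h | h
    · exact (hpair i i.2 j j.2 h).2
    · obtain ⟨x, hx, y, hy, hxy⟩ := (hpair j j.2 i i.2 h).2
      exact ⟨y, hy, x, hx, hxy.symm⟩

end IsTGraph

end WellOrder

/-- if G is a T-graph, κ is regular uncountable and T has a κ-branch,
then K_κ is a minor of G. -/
theorem stmt14 (κ : Cardinal.{u}) (hreg : κ.IsRegular) (hunc : ℵ₀ < κ)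
    (T : Type u) [PartialOrder T] (hT : IsSetTree T)
    (G : SimpleGraph T) (hG : IsTGraph G)
    (hb : HasChainOfSize T κ) :
    HasCompleteMinor G κ := by
  obtain ⟨C, hC, hCκ⟩ := hb
  obtain ⟨e, he, hdown⟩ := hT.exists_strictMono_toType hC hCκ.ge
  refine HasCompleteMinor.map (SimpleGraph.Embedding.comap ⟨e, he.injective⟩ G) ?_
  refine (hG.comap he hdown).hasCompleteMinor_of_wellOrder hunc ?_ ?_ fun i => ?_
  · rw [mk_toType, card_ord]
  · rw [Ordinal.cof_toType, hreg.cof_ord]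
  · simpa using mk_Iio_lt i
end

section
/- Let κ be a regular cardinal and T a tree of size κ with no κ-branch and no antichain of size κ (a κ-Suslin tree). Then the comparability graph of T is a graph of size κ with no independent set of size κ and no K_κ minor. Conversely, the existence of a graph of size κ with no independent set of size κ and no K_κ minor implies the existence of a κ-Suslin tree. -/
/-!
In the comparability graph of a tree every connected vertex set has a least element, and the
least elements of the branch sets of a complete minor are pairwise comparable, so a `K_κ` minor
yields a chain of size `κ`; an independent set is an antichain.

Conversely, well-order the vertices so that every initial segment has fewer than `κ` elements,
and form the tree of connected components of the tails `G[{w | v ≤ w}]`, ordered by the stage `v`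
and reverse inclusion. Vertices chosen in an antichain of components are pairwise distinct and
non-adjacent. A chain of size `κ` gives connected sets `K γ` that shrink and eventually avoid every
vertex. If `G` has no independent set of size `κ`, each `K γ` contains a vertex with neighbours in
`K δ` for cofinally many `δ`; joining such neighbours by paths inside a late `K δ` builds the
branch sets of a `K_κ` minor one at a time.
-/

universe u

open Cardinal

open Set Filter

section Tree

variable {T : Type u} [PartialOrder T]

theorem compGraph_adj {a b : T} : (compGraph T).Adj a b ↔ a ≠ b ∧ (a ≤ b ∨ b ≤ a) :=
  SimpleGraph.fromRel_adj _ a b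

namespace IsSetTree

theorem le_total_of_le_s18 (hT : IsSetTree T) {a b t : T} (ha : a ≤ t) (hb : b ≤ t) :
    a ≤ b ∨ b ≤ a := by
  rcases ha.eq_or_lt with rfl | ha
  · exact .inr hb
  rcases hb.eq_or_lt with rfl | hb
  · exact .inl ha.le
  have := hT t
  rcases trichotomous_of (· < ·) (⟨a, ha⟩ : {s // s < t}) ⟨b, hb⟩ with h | h | h
  · exact .inl (le_of_lt h)
  · exact .inl (congrArg Subtype.val h).le
  · exact .inr (le_of_lt h)

theorem exists_minimal (hT : IsSetTree T) {S : Set T} (hS : S.Nonempty) :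
    ∃ m ∈ S, ∀ x ∈ S, ¬ x < m := by
  obtain ⟨t, ht⟩ := hS
  by_cases h : ∃ x ∈ S, x < t
  · obtain ⟨x, hxS, hxt⟩ := h
    obtain ⟨m, hmS, hmin⟩ := (hT t).wf.has_min {s : {s // s < t} | s.1 ∈ S} ⟨⟨x, hxt⟩, hxS⟩
    exact ⟨m, hmS, fun y hyS hym => hmin ⟨y, hym.trans m.2⟩ hyS hym⟩
  · push Not at h
    exact ⟨t, ht, h⟩

theorem exists_le_le_of_walk (hT : IsSetTree T) {U : Set T} {a b : U}
    (p : ((compGraph T).induce U).Walk a b) : ∃ w ∈ U, w ≤ a ∧ w ≤ b := by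
  induction p with
  | nil => exact ⟨_, Subtype.prop _, le_rfl, le_rfl⟩
  | @cons x y z hxy _ ih =>
    obtain ⟨w, hwU, hwy, hwz⟩ := ih
    rcases (compGraph_adj.1 hxy).2 with hxy | hyx
    · rcases hT.le_total_of_le_s18 hwy hxy with hwx | hxw
      · exact ⟨w, hwU, hwx, hwz⟩
      · exact ⟨x, x.2, le_rfl, hxw.trans hwz⟩
    · exact ⟨w, hwU, hwy.trans hyx, hwz⟩

theorem exists_least_of_connected (hT : IsSetTree T) {U : Set T}
    (hU : ((compGraph T).induce U).Connected) : ∃ m ∈ U, ∀ x ∈ U, m ≤ x := by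
  obtain ⟨m, hmU, hmin⟩ := hT.exists_minimal (nonempty_coe_sort.mp hU.nonempty)
  refine ⟨m, hmU, fun x hx => ?_⟩
  obtain ⟨w, hwU, hwm, hwx⟩ := hT.exists_le_le_of_walk (hU.preconnected ⟨m, hmU⟩ ⟨x, hx⟩).some
  rcases hwm.eq_or_lt with rfl | hlt
  · exact hwx
  · exact absurd hlt (hmin w hwU)

theorem not_hasCompleteMinor_compGraph (hT : IsSetTree T) {κ : Cardinal.{u}}
    (h : ¬ HasChainOfSize T κ) : ¬ HasCompleteMinor (compGraph T) κ := by
  rintro ⟨ι, U, hι, -, hdisj, hconn, hadj⟩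
  choose m hmU hmle using fun i => hT.exists_least_of_connected (hconn i)
  have hm : Function.Injective m := fun i j hij =>
    by_contra fun hne => (hdisj i j hne).ne_of_mem (hmU i) (hij ▸ hmU j) rfl
  refine h ⟨range m, ?_, by rw [mk_range_eq m hm, hι]⟩
  rintro _ ⟨i, rfl⟩ _ ⟨j, rfl⟩ hij
  obtain ⟨a, ha, b, hb, hab⟩ := hadj i j (ne_of_apply_ne m hij)
  rcases (compGraph_adj.1 hab).2 with hab | hba
  · exact hT.le_total_of_le_s18 ((hmle i a ha).trans hab) (hmle j b hb)
  · exact hT.le_total_of_le_s18 (hmle i a ha) ((hmle j b hb).trans hba)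

end IsSetTree

theorem not_hasIndepOfSize_compGraph {κ : Cardinal.{u}} (h : ¬ HasAntichainOfSize T κ) :
    ¬ HasIndepOfSize (compGraph T) κ := by
  rintro ⟨S, hS, hind⟩
  exact h ⟨S, fun x hx y hy hxy hle => hind x hx y hy (compGraph_adj.2 ⟨hxy, .inl hle⟩), hS⟩

end Tree

section Sequences

variable {V : Type u} {G : SimpleGraph V} {ι : Type u} [LinearOrder ι]

theorem hasIndepOfSize_of_forall_lt (f : ι → V)
    (h : ∀ i j, i < j → f i ≠ f j ∧ ¬ G.Adj (f i) (f j)) : HasIndepOfSize G #ι := by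
  have hf : Function.Injective f := fun i j hij => by
    by_contra hne
    rcases lt_or_gt_of_ne hne with hlt | hlt
    · exact (h i j hlt).1 hij
    · exact (h j i hlt).1 hij.symm
  refine ⟨range f, mk_range_eq f hf, ?_⟩
  rintro _ ⟨i, rfl⟩ _ ⟨j, rfl⟩ hadj
  rcases lt_trichotomy i j with hlt | rfl | hlt
  · exact (h i j hlt).2 hadj
  · exact G.irrefl hadj
  · exact (h j i hlt).2 hadj.symm

theorem hasCompleteMinor_of_forall_lt (B : ι → Set V) (hconn : ∀ i, (G.induce (B i)).Connected)
    (h : ∀ i j, i < j → Disjoint (B i) (B j) ∧ ∃ x ∈ B i, ∃ y ∈ B j, G.Adj x y) :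
    HasCompleteMinor G #ι := by
  refine ⟨ι, B, rfl, fun i => nonempty_coe_sort.mp (hconn i).nonempty, fun i j hij => ?_, hconn,
    fun i j hij => ?_⟩
  · rcases lt_or_gt_of_ne hij with hlt | hlt
    · exact (h i j hlt).1
    · exact (h j i hlt).1.symm
  · rcases lt_or_gt_of_ne hij with hlt | hlt
    · exact (h i j hlt).2
    · obtain ⟨x, hx, y, hy, hxy⟩ := (h j i hlt).2
      exact ⟨y, hy, x, hx, hxy.symm⟩

end Sequences

theorem WellFoundedLT.exists_seq_of_step {O α : Type*} [Preorder O] [WellFoundedLT O] [Nonempty α]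
    (P : O → (O → α) → α → Prop)
    (hP : ∀ ξ E E' b, (∀ ζ < ξ, E ζ = E' ζ) → P ξ E b → P ξ E' b)
    (hstep : ∀ ξ E, (∀ ζ < ξ, P ζ E (E ζ)) → ∃ b, P ξ E b) :
    ∃ F : O → α, ∀ ξ, P ξ F (F ξ) := by
  classical
  let extend (ξ : O) (IH : ∀ ζ < ξ, α) : O → α :=
    fun ζ => if h : ζ < ξ then IH ζ h else Classical.arbitrary α
  let F : O → α := WellFoundedLT.fix fun ξ IH => Classical.epsilon (P ξ (extend ξ IH))
  refine ⟨F, fun ξ => ?_⟩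
  induction ξ using WellFoundedLT.induction with | _ ξ ih
  have hagree : ∀ ζ < ξ, extend ξ (fun ζ _ => F ζ) ζ = F ζ := fun ζ hζ => dif_pos hζ
  have hex : ∃ b, P ξ (extend ξ fun ζ _ => F ζ) b := by
    refine hstep ξ _ fun ζ hζ => ?_
    rw [hagree ζ hζ]
    exact hP ζ F _ _ (fun η hη => (hagree η (hη.trans hζ)).symm) (ih ζ hζ)
  have hF : F ξ = Classical.epsilon (P ξ (extend ξ fun ζ _ => F ζ)) := WellFoundedLT.fix_eq _ ξ
  exact hP ξ _ F _ hagree (hF ▸ Classical.epsilon_spec hex)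

theorem Filter.cardinalInterFilter_atTop_cof (α : Type u) [LinearOrder α] :
    CardinalInterFilter (atTop : Filter α) (Order.cof α) where
  cardinal_sInter_mem S hS hmem := by
    rcases isEmpty_or_nonempty α with hα | hα
    · exact univ_mem' isEmptyElim
    choose! a ha using fun s hs => mem_atTop_sets.1 (hmem s hs)
    have hbdd : ¬ IsCofinal (a '' S) := fun hcof =>
      ((Order.cof_le hcof).trans mk_image_le).not_gt hS
    obtain ⟨b, hb⟩ : ∃ b, ∀ s ∈ S, a s < b := by
      simpa [IsCofinal] using hbdd
    exact mem_atTop_sets.2 ⟨b, fun c hc s hs => ha s hs c ((hb s hs).le.trans hc)⟩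

namespace SimpleGraph

section Reachability

variable {V : Type u} (G : SimpleGraph V)

def ReachableIn (S : Set V) (a b : V) : Prop :=
  ∃ p : G.Walk a b, ∀ x ∈ p.support, x ∈ S

def componentIn (S : Set V) (v : V) : Set V :=
  {w | G.ReachableIn S v w}

variable {G} {S S' : Set V} {a b c v w : V}

namespace ReachableIn

theorem refl (ha : a ∈ S) : G.ReachableIn S a a :=
  ⟨.nil, by simpa using ha⟩

theorem symm (h : G.ReachableIn S a b) : G.ReachableIn S b a :=
  let ⟨p, hp⟩ := h
  ⟨p.reverse, by simpa using hp⟩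

theorem trans (h₁ : G.ReachableIn S a b) (h₂ : G.ReachableIn S b c) : G.ReachableIn S a c := by
  obtain ⟨p, hp⟩ := h₁
  obtain ⟨q, hq⟩ := h₂
  exact ⟨p.append q, fun x hx => ((Walk.mem_support_append_iff _ _).1 hx).elim (hp x) (hq x)⟩

theorem mono (hS : S ⊆ S') (h : G.ReachableIn S a b) : G.ReachableIn S' a b :=
  let ⟨p, hp⟩ := h
  ⟨p, fun x hx => hS (hp x hx)⟩

theorem mem_right (h : G.ReachableIn S a b) : b ∈ S :=
  h.choose_spec b h.choose.end_mem_support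

theorem trans_adj (h : G.ReachableIn S a b) (hbc : G.Adj b c) (hc : c ∈ S) :
    G.ReachableIn S a c :=
  h.trans ⟨hbc.toWalk, by simp [h.mem_right, hc]⟩

end ReachableIn

theorem mem_componentIn_self (hv : v ∈ S) : v ∈ G.componentIn S v :=
  .refl hv

theorem componentIn_subset : G.componentIn S v ⊆ S :=
  fun _ h => h.mem_right

theorem componentIn_eq_of_mem (hw : w ∈ G.componentIn S v) :
    G.componentIn S w = G.componentIn S v :=
  ext fun _ => ⟨hw.trans, hw.symm.trans⟩

theorem componentIn_mono (hS : S ⊆ S') : G.componentIn S v ⊆ G.componentIn S' v :=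
  fun _ h => h.mono hS

theorem mem_componentIn_of_adj (hw : w ∈ G.componentIn S v) (hadj : G.Adj w a) (ha : a ∈ S) :
    a ∈ G.componentIn S v :=
  hw.trans_adj hadj ha

theorem reachableIn_componentIn (ha : a ∈ G.componentIn S v) (hb : b ∈ G.componentIn S v) :
    G.ReachableIn (G.componentIn S v) a b := by
  classical
  obtain ⟨p, hp⟩ := ha.symm.trans hb
  exact ⟨p, fun x hx =>
    ha.trans ⟨p.takeUntil x hx, fun y hy => hp y (p.support_takeUntil_subset_support hx hy)⟩⟩

theorem exists_connected_subset_of_reachableIn {κ : Cardinal.{u}} (hκ : κ.IsRegular) {K : Set V}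
    {x : V} (hx : x ∈ K) {ι : Type u} (hι : #ι < κ) {y : ι → V}
    (hy : ∀ i, G.ReachableIn K x (y i)) :
    ∃ B ⊆ K, x ∈ B ∧ (∀ i, y i ∈ B) ∧ #B < κ ∧ (G.induce B).Connected := by
  choose p hp using hy
  refine ⟨insert x (⋃ i, {z | z ∈ (p i).support}),
    insert_subset hx (iUnion_subset fun i z hz => hp i z hz), mem_insert _ _,
    fun i => mem_insert_of_mem _ (mem_iUnion.2 ⟨i, (p i).end_mem_support⟩), ?_, ?_⟩
  · refine mk_insert_le.trans_lt
      (add_lt_of_lt hκ.aleph0_le ?_ (one_lt_aleph0.trans_le hκ.aleph0_le))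
    rw [card_iUnion_lt_iff_forall_of_isRegular hκ hι]
    exact fun i => (p i).support.finite_toSet.lt_aleph0.trans_le hκ.aleph0_le
  · refine G.induce_connected_of_patches x (mem_insert _ _) fun {v} hv => ?_
    rcases hv with rfl | hv
    · exact ⟨{v}, singleton_subset_iff.2 (mem_insert _ _), rfl, rfl, .rfl⟩
    · obtain ⟨i, hi⟩ := mem_iUnion.1 hv
      exact ⟨{z | z ∈ (p i).support},
        (subset_iUnion (fun i => {z | z ∈ (p i).support}) i).trans (subset_insert _ _),
        (p i).start_mem_support, hi, (p i).connected_induce_support.preconnected _ _⟩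

end Reachability

section Tails

variable {V : Type u} [LinearOrder V] {κ : Cardinal.{u}}

structure IsShrinkingConnectedFamily (G : SimpleGraph V) (K : V → Set V) : Prop where
  nonempty : ∀ γ, (K γ).Nonempty
  reachableIn : ∀ γ, ∀ a ∈ K γ, ∀ b ∈ K γ, G.ReachableIn (K γ) a b
  eventually_subset : ∀ γ, ∀ᶠ δ in atTop, K δ ⊆ K γ
  eventually_notMem : ∀ v, ∀ᶠ δ in atTop, v ∉ K δ

namespace IsShrinkingConnectedFamily

variable {G : SimpleGraph V} {K : V → Set V}

theorem eventually_disjoint [CardinalInterFilter (atTop : Filter V) κ]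
    (hK : G.IsShrinkingConnectedFamily K) {W : Set V} (hW : #W < κ) :
    ∀ᶠ δ in atTop, Disjoint W (K δ) := by
  simpa only [Set.disjoint_left] using
    (eventually_cardinal_ball hW).2 fun v _ => hK.eventually_notMem v

theorem exists_mem_forall_ne_not_adj [Nonempty V] [CardinalInterFilter (atTop : Filter V) κ]
    (hK : G.IsShrinkingConnectedFamily K) (γ : V) {ι : Type u} (hι : #ι < κ) (x : ι → V)
    (hx : ∀ i, ∀ᶠ δ in atTop, ∀ u ∈ K δ, ¬ G.Adj (x i) u) :
    ∃ b ∈ K γ, ∀ i, x i ≠ b ∧ ¬ G.Adj (x i) b := by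
  obtain ⟨δ, hδγ, hδ⟩ := ((hK.eventually_subset γ).and ((eventually_cardinal_forall hι).2
    fun i => (hK.eventually_notMem (x i)).and (hx i))).exists
  obtain ⟨b, hb⟩ := hK.nonempty δ
  exact ⟨b, hδγ hb, fun i => ⟨fun h => (hδ i).1 (h ▸ hb), (hδ i).2 b hb⟩⟩

theorem exists_mem_frequently_adj [WellFoundedLT V] [Nonempty V]
    [CardinalInterFilter (atTop : Filter V) κ] (hK : G.IsShrinkingConnectedFamily K)
    (hV : #V = κ) (hIio : ∀ v : V, #(Iio v) < κ) (hI : ¬ HasIndepOfSize G κ) (γ : V) :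
    ∃ w ∈ K γ, ∃ᶠ δ in atTop, ∃ u ∈ K δ, G.Adj w u := by
  by_contra! h
  obtain ⟨F, hF⟩ := WellFoundedLT.exists_seq_of_step
    (fun ξ E b => b ∈ K γ ∧ ∀ ζ < ξ, E ζ ≠ b ∧ ¬ G.Adj (E ζ) b)
    (fun ξ E E' b hEE' h => ⟨h.1, fun ζ hζ => hEE' ζ hζ ▸ h.2 ζ hζ⟩)
    (fun ξ E hE => by
      obtain ⟨b, hb, hfresh⟩ := hK.exists_mem_forall_ne_not_adj γ (hIio ξ)
        (fun ζ : Iio ξ => E ζ) fun ζ => h _ (hE ζ ζ.2).1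
      exact ⟨b, hb, fun ζ hζ => hfresh ⟨ζ, hζ⟩⟩)
  exact hI (hV ▸ hasIndepOfSize_of_forall_lt F fun ζ ξ hlt => (hF ξ).2 ζ hlt)

theorem exists_branchSet [Nonempty V] [CardinalInterFilter (atTop : Filter V) κ]
    (hreg : κ.IsRegular) (hK : G.IsShrinkingConnectedFamily K)
    (hfreq : ∀ γ, ∃ w ∈ K γ, ∃ᶠ δ in atTop, ∃ u ∈ K δ, G.Adj w u)
    {ι : Type u} (hι : #ι < κ) (E : ι → Set V) (hE : ∀ i, #(E i) < κ)
    (hEfreq : ∀ i, ∃ w ∈ E i, ∃ᶠ δ in atTop, ∃ u ∈ K δ, G.Adj w u) :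
    ∃ B : Set V, #B < κ ∧ (G.induce B).Connected ∧
      (∃ w ∈ B, ∃ᶠ δ in atTop, ∃ u ∈ K δ, G.Adj w u) ∧
      ∀ i, Disjoint (E i) B ∧ ∃ x ∈ E i, ∃ y ∈ B, G.Adj x y := by
  obtain ⟨γ, hγ⟩ :=
    ((eventually_cardinal_forall hι).2 fun i => hK.eventually_disjoint (hE i)).exists
  choose w hwE hw using hEfreq
  have hu : ∀ i, ∃ u ∈ K γ, G.Adj (w i) u := fun i => by
    obtain ⟨δ, ⟨u, hu, hadj⟩, hδ⟩ := ((hw i).and_eventually (hK.eventually_subset γ)).exists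
    exact ⟨u, hδ hu, hadj⟩
  choose u hu hadj using hu
  obtain ⟨x, hx, hxfreq⟩ := hfreq γ
  obtain ⟨B, hBK, hxB, huB, hB, hBconn⟩ := G.exists_connected_subset_of_reachableIn hreg hx hι
    fun i => hK.reachableIn γ x hx (u i) (hu i)
  exact ⟨B, hB, hBconn, ⟨x, hxB, hxfreq⟩,
    fun i => ⟨(hγ i).mono_right hBK, w i, hwE i, u i, huB i, hadj i⟩⟩

theorem hasCompleteMinor [WellFoundedLT V] [Nonempty V] [CardinalInterFilter (atTop : Filter V) κ]
    (hK : G.IsShrinkingConnectedFamily K) (hreg : κ.IsRegular) (hV : #V = κ)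
    (hIio : ∀ v : V, #(Iio v) < κ) (hI : ¬ HasIndepOfSize G κ) : HasCompleteMinor G κ := by
  obtain ⟨B, hB⟩ := WellFoundedLT.exists_seq_of_step (α := Set V)
    (fun ξ E B => #B < κ ∧ (G.induce B).Connected ∧
      (∃ w ∈ B, ∃ᶠ δ in atTop, ∃ u ∈ K δ, G.Adj w u) ∧
      ∀ ζ < ξ, Disjoint (E ζ) B ∧ ∃ x ∈ E ζ, ∃ y ∈ B, G.Adj x y)
    (fun ξ E E' B hEE' h => ⟨h.1, h.2.1, h.2.2.1, fun ζ hζ => hEE' ζ hζ ▸ h.2.2.2 ζ hζ⟩)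
    (fun ξ E hE => by
      obtain ⟨B, h₁, h₂, h₃, h₄⟩ := hK.exists_branchSet hreg
        (hK.exists_mem_frequently_adj hV hIio hI) (hIio ξ) (fun ζ : Iio ξ => E ζ)
        (fun ζ => (hE ζ ζ.2).1) fun ζ => (hE ζ ζ.2).2.2.1
      exact ⟨B, h₁, h₂, h₃, fun ζ hζ => h₄ ⟨ζ, hζ⟩⟩)
  exact hV ▸ hasCompleteMinor_of_forall_lt B (fun ξ => (hB ξ).2.1) fun ζ ξ hlt => (hB ξ).2.2.2 ζ hlt

end IsShrinkingConnectedFamily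

@[ext]
structure TailComponent (G : SimpleGraph V) where
  stage : V
  carrier : Set V
  exists_eq_componentIn : ∃ v ∈ Ici stage, carrier = G.componentIn (Ici stage) v

namespace TailComponent

variable {G : SimpleGraph V} {s t u : G.TailComponent} {a b : V}

theorem carrier_eq_of_mem (ha : a ∈ t.carrier) : t.carrier = G.componentIn (Ici t.stage) a := by
  obtain ⟨v, -, hv⟩ := t.exists_eq_componentIn
  rw [hv] at ha ⊢
  exact (componentIn_eq_of_mem ha).symm

theorem carrier_subset : t.carrier ⊆ Ici t.stage := by
  obtain ⟨v, -, hv⟩ := t.exists_eq_componentIn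
  exact hv ▸ componentIn_subset

theorem carrier_nonempty : t.carrier.Nonempty := by
  obtain ⟨v, hv, hcarrier⟩ := t.exists_eq_componentIn
  exact ⟨v, hcarrier ▸ mem_componentIn_self hv⟩

theorem reachableIn_carrier (ha : a ∈ t.carrier) (hb : b ∈ t.carrier) :
    G.ReachableIn t.carrier a b := by
  obtain ⟨v, -, hv⟩ := t.exists_eq_componentIn
  rw [hv] at ha hb ⊢
  exact reachableIn_componentIn ha hb

instance : PartialOrder G.TailComponent where
  le s t := s.stage ≤ t.stage ∧ t.carrier ⊆ s.carrier
  le_refl s := ⟨le_rfl, subset_rfl⟩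
  le_trans s t u hst htu := ⟨hst.1.trans htu.1, htu.2.trans hst.2⟩
  le_antisymm s t hst hts := TailComponent.ext (hst.1.antisymm hts.1) (hts.2.antisymm hst.2)

theorem le_def : s ≤ t ↔ s.stage ≤ t.stage ∧ t.carrier ⊆ s.carrier :=
  Iff.rfl

theorem le_of_stage_le (h : s.stage ≤ t.stage) (hmeet : (s.carrier ∩ t.carrier).Nonempty) :
    s ≤ t := by
  obtain ⟨z, hzs, hzt⟩ := hmeet
  refine ⟨h, ?_⟩
  rw [carrier_eq_of_mem hzs, carrier_eq_of_mem hzt]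
  exact componentIn_mono (Ici_subset_Ici.2 h)

theorem stage_strictMono : StrictMono (stage : G.TailComponent → V) := fun s t hst => by
  obtain ⟨z, hz⟩ := t.carrier_nonempty
  exact (le_def.1 hst.le).1.lt_of_ne fun heq =>
    hst.not_ge (le_of_stage_le heq.ge ⟨z, hz, (le_def.1 hst.le).2 hz⟩)

theorem le_of_stage_le_of_le (hsu : s ≤ u) (htu : t ≤ u) (h : s.stage ≤ t.stage) : s ≤ t := by
  obtain ⟨z, hz⟩ := u.carrier_nonempty
  exact le_of_stage_le h ⟨z, hsu.2 hz, htu.2 hz⟩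

theorem isSetTree [WellFoundedLT V] : IsSetTree G.TailComponent := fun t =>
  { toIsWellFounded := (stage_strictMono.comp (Subtype.strictMono_coe _)).wellFoundedLT
    toTrichotomous := trichotomous_def.2 fun a b hab hba => by
      wlog h : a.1.stage ≤ b.1.stage generalizing a b
      · exact (this b a hba hab (le_of_not_ge h)).symm
      exact Subtype.ext ((le_of_stage_le_of_le a.2.le b.2.le h).eq_of_not_lt hab) }

theorem mk_eq (hκ : ℵ₀ ≤ κ) (hV : #V = κ) : #G.TailComponent = κ := by
  refine le_antisymm ?_ ?_
  · have hinj : Function.Injective fun t : G.TailComponent => (t.stage, t.carrier_nonempty.some) :=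
      fun s t hst => by
        simp only [Prod.mk.injEq] at hst
        ext1
        · exact hst.1
        · rw [carrier_eq_of_mem s.carrier_nonempty.some_mem,
            carrier_eq_of_mem t.carrier_nonempty.some_mem, hst.1, hst.2]
    calc #G.TailComponent ≤ #(V × V) := mk_le_of_injective hinj
      _ = κ := by rw [mk_prod, lift_id, hV, mul_eq_self hκ]
  · have hsurj : Function.Surjective (stage : G.TailComponent → V) :=
      fun v => ⟨⟨v, G.componentIn (Ici v) v, v, mem_Ici.2 le_rfl, rfl⟩, rfl⟩
    exact hV ▸ mk_le_of_surjective hsurj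

theorem ne_and_not_adj_of_not_le (hst : ¬ s ≤ t) (h : s.stage ≤ t.stage) (ha : a ∈ s.carrier)
    (hb : b ∈ t.carrier) : a ≠ b ∧ ¬ G.Adj a b := by
  have hbs : b ∉ s.carrier := fun hbs => hst (le_of_stage_le h ⟨b, hbs, hb⟩)
  refine ⟨fun hab => hbs (hab ▸ ha), fun hab => hbs ?_⟩
  rw [carrier_eq_of_mem ha]
  exact mem_componentIn_of_adj (mem_componentIn_self (carrier_subset ha)) hab
    (Ici_subset_Ici.2 h (carrier_subset hb))

theorem hasIndepOfSize_of_hasAntichainOfSize (h : HasAntichainOfSize G.TailComponent κ) : HasIndepOfSize G κ := by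
  obtain ⟨A, hA, hAκ⟩ := h
  let p : G.TailComponent → V := fun t => t.carrier_nonempty.some
  have key : ∀ s ∈ A, ∀ t ∈ A, s ≠ t → p s ≠ p t ∧ ¬ G.Adj (p s) (p t) := by
    intro s hs t ht hst
    rcases le_total s.stage t.stage with h | h
    · exact ne_and_not_adj_of_not_le (hA hs ht hst) h s.carrier_nonempty.some_mem
        t.carrier_nonempty.some_mem
    · obtain ⟨hne, hadj⟩ := ne_and_not_adj_of_not_le (hA ht hs hst.symm) h
        t.carrier_nonempty.some_mem s.carrier_nonempty.some_mem
      exact ⟨hne.symm, fun h' => hadj h'.symm⟩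
  refine ⟨p '' A, ?_, ?_⟩
  · rw [mk_image_eq_of_injOn _ _ fun s hs t ht h => by_contra fun hst => (key s hs t ht hst).1 h,
      hAκ]
  · rintro _ ⟨s, hs, rfl⟩ _ ⟨t, ht, rfl⟩
    rcases eq_or_ne s t with rfl | hst
    · exact G.irrefl
    · exact (key s hs t ht hst).2

theorem le_of_stage_le_of_isChain {C : Set G.TailComponent} (hC : IsChain (· ≤ ·) C)
    (hs : s ∈ C) (ht : t ∈ C) (h : s.stage ≤ t.stage) : s ≤ t :=
  (hC.total hs ht).elim id fun hts => (hts.eq_of_not_lt fun hlt => (stage_strictMono hlt).not_ge h).ge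

theorem exists_isShrinkingConnectedFamily (hκ : ℵ₀ ≤ κ)
    (hIio : ∀ v : V, #(Iio v) < κ) (h : HasChainOfSize G.TailComponent κ) :
    ∃ K : V → Set V, G.IsShrinkingConnectedFamily K := by
  obtain ⟨C, hC, hCκ⟩ := h
  have hcofinal : ∀ γ, ∃ t ∈ C, γ < t.stage := by
    by_contra! h
    obtain ⟨γ, hγ⟩ := h
    have hinj : Function.Injective fun t : C => (⟨t.1.stage, hγ t.1 t.2⟩ : Iic γ) :=
      fun s t hst => Subtype.ext <|
        (le_of_stage_le_of_isChain hC s.2 t.2 (congrArg Subtype.val hst).le).antisymm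
          (le_of_stage_le_of_isChain hC t.2 s.2 (congrArg Subtype.val hst).ge)
    have hIic : #(Iic γ) < κ := by
      rw [← Iio_insert, mk_insert self_notMem_Iio]
      exact add_one_lt_of_lt hκ (hIio γ)
    exact (hCκ ▸ mk_le_of_injective hinj).not_gt hIic
  choose t htC hγt using hcofinal
  refine ⟨fun γ => (t γ).carrier, ⟨fun γ => (t γ).carrier_nonempty,
    fun γ a ha b hb => reachableIn_carrier ha hb, fun γ => ?_, fun v => ?_⟩⟩
  · exact (eventually_ge_atTop (t γ).stage).mono fun δ hδ =>
      (le_of_stage_le_of_isChain hC (htC γ) (htC δ) (hδ.trans (hγt δ).le)).2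
  · exact (eventually_ge_atTop v).mono fun δ hδ hv =>
      (hδ.trans_lt (hγt δ)).not_ge (carrier_subset hv)

end TailComponent

end Tails

end SimpleGraph

/-- for κ regular, the comparability graph of a κ-Suslin tree is a graph
of size κ with no independent set of size κ and no K_κ minor; conversely the existence
of such a graph implies the existence of a κ-Suslin tree. -/
theorem stmt18 (κ : Cardinal.{u}) (hreg : κ.IsRegular) :
    (∀ (T : Type u) (i : PartialOrder T), @IsSetTree T i → #T = κ →
      ¬ @HasChainOfSize T i κ → ¬ @HasAntichainOfSize T i κ →
      #T = κ ∧ ¬ HasIndepOfSize (@compGraph T i) κ ∧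
        ¬ HasCompleteMinor (@compGraph T i) κ) ∧
    ((∃ (V : Type u) (G : SimpleGraph V), #V = κ ∧
        ¬ HasIndepOfSize G κ ∧ ¬ HasCompleteMinor G κ) →
      ∃ (T : Type u) (i : PartialOrder T), @IsSetTree T i ∧ #T = κ ∧
        ¬ @HasChainOfSize T i κ ∧ ¬ @HasAntichainOfSize T i κ) := by
  refine ⟨fun T _ hT hTκ hchain hanti =>
    ⟨hTκ, not_hasIndepOfSize_compGraph hanti, hT.not_hasCompleteMinor_compGraph hchain⟩, ?_⟩
  rintro ⟨V, G, hV, hI, hM⟩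
  obtain ⟨_, _, hord⟩ := Cardinal.exists_ord_eq_type_lt V
  have hIio : ∀ v : V, #(Iio v) < κ := fun v => hV ▸ mk_Iio_lt v hord
  have : Nonempty V := mk_ne_zero_iff.1 (hV ▸ hreg.ne_zero)
  have : CardinalInterFilter (atTop : Filter V) κ := by
    rw [← hreg.cof_ord, ← hV, hord, Ordinal.cof_type]
    exact cardinalInterFilter_atTop_cof V
  refine ⟨G.TailComponent, inferInstance, SimpleGraph.TailComponent.isSetTree,
    SimpleGraph.TailComponent.mk_eq hreg.aleph0_le hV, fun hC => ?_,
    fun hA => hI (SimpleGraph.TailComponent.hasIndepOfSize_of_hasAntichainOfSize hA)⟩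
  obtain ⟨K, hK⟩ :=
    SimpleGraph.TailComponent.exists_isShrinkingConnectedFamily hreg.aleph0_le hIio hC
  exact hM (hK.hasCompleteMinor hreg hV hIio hI)
end
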